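/- arXiv:2306.07375 — 6 statements merged into one kernel-verified Lean document; each statement's English description precedes it below -/
import Mathlib

section
/- Let f ∈ A satisfy Re(f(z)/z) ≥ 0 on D \ {0}, write p(z) = f(z)/z (so p(0)=1 and Re p ≥ 0 on D). If k : [0,1) → ℝ satisfies k(r) ≥ (1+r²)/(1-r²) for all r, then Re[k(|z|) f(z)/z + f'(z)] ≥ 0 for all z ∈ D \ {0}. -/
/-!
`p = f / z` (the `dslope` of `f` at `0`) is holomorphic on the disk with `p 0 = 1` and
`Re p ≥ 0`, so `Re p > 0` by the maximum principle applied to `exp (-p)`. Schwarz's lemma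
for the Cayley transform of `p ∘ φ`, where `φ` is the disk automorphism sending `0` to `z`,
gives `‖p' z‖ (1 - r²) ≤ 2 Re p z` with `r = ‖z‖`. As `f' = p + z p'`, the real part in
question is at least `(k r + 1) Re p z - r ‖p' z‖`, which is
`≥ Re p z ((1 + r²) / (1 - r²) + 1 - 2r / (1 - r²)) = 2 Re p z / (1 + r) ≥ 0`.
-/

open Metric Complex Set ComplexConjugate

lemma re_pos_of_re_nonneg {U : Set ℂ} {p : ℂ → ℂ} (hU : IsPreconnected U) (hUo : IsOpen U)
    (hp : DifferentiableOn ℂ p U) (hre : ∀ z ∈ U, 0 ≤ (p z).re) {w : ℂ} (hw : w ∈ U)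
    (hpw : 0 < (p w).re) {z : ℂ} (hz : z ∈ U) : 0 < (p z).re := by
  refine (hre z hz).lt_of_ne' fun hz0 => hpw.ne' ?_
  have hmax : IsMaxOn (norm ∘ fun u => exp (-p u)) U z := fun u hu => by
    simp [norm_exp, hz0, hre u hu]
  simpa [norm_exp, hz0] using norm_eqOn_of_isPreconnected_of_isMaxOn hU hUo hp.neg.cexp hz hmax hw

lemma ne_zero_of_normSq_lt {x y : ℂ} (h : normSq x < normSq y) : y ≠ 0 := by
  rintro rfl
  exact (normSq_nonneg x).not_gt (by simpa using h)

lemma norm_div_lt_one_of_normSq_lt {x y : ℂ} (h : normSq x < normSq y) : ‖x / y‖ < 1 := by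
  rw [norm_div, div_lt_one (norm_pos_iff.2 (ne_zero_of_normSq_lt h)), norm_def, norm_def]
  exact Real.sqrt_lt_sqrt (normSq_nonneg x) h

section DiskAutomorphism

variable {a : ℂ}

lemma normSq_add_lt_normSq_one_add_conj_mul (ha : ‖a‖ < 1) {w : ℂ} (hw : ‖w‖ < 1) :
    normSq (w + a) < normSq (1 + conj a * w) := by
  have key : normSq (1 + conj a * w) - normSq (w + a) = (1 - normSq a) * (1 - normSq w) := by
    simp only [normSq_apply, add_re, add_im, mul_re, mul_im, conj_re, conj_im, one_re, one_im]
    ring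
  have ha' : normSq a < 1 := by rw [← Complex.sq_norm]; nlinarith [norm_nonneg a]
  have hw' : normSq w < 1 := by rw [← Complex.sq_norm]; nlinarith [norm_nonneg w]
  nlinarith [mul_pos (sub_pos.2 ha') (sub_pos.2 hw')]

lemma mapsTo_add_div_one_add_conj_mul (ha : ‖a‖ < 1) :
    MapsTo (fun w => (w + a) / (1 + conj a * w)) (ball 0 1) (ball 0 1) := fun w hw => by
  rw [mem_ball_zero_iff] at hw ⊢
  exact norm_div_lt_one_of_normSq_lt (normSq_add_lt_normSq_one_add_conj_mul ha hw)

lemma differentiableOn_add_div_one_add_conj_mul (ha : ‖a‖ < 1) :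
    DifferentiableOn ℂ (fun w => (w + a) / (1 + conj a * w)) (ball 0 1) := by
  refine DifferentiableOn.div (by fun_prop) (by fun_prop) fun w hw => ?_
  exact ne_zero_of_normSq_lt (normSq_add_lt_normSq_one_add_conj_mul ha (mem_ball_zero_iff.1 hw))

lemma hasDerivAt_add_div_one_add_conj_mul_zero (a : ℂ) :
    HasDerivAt (fun w => (w + a) / (1 + conj a * w)) (1 - normSq a) 0 := by
  refine (((hasDerivAt_id' (0 : ℂ)).add_const a).div
    (((hasDerivAt_id' (0 : ℂ)).const_mul (conj a)).const_add 1) (by simp)).congr_deriv ?_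
  simp [mul_conj]

end DiskAutomorphism

section Cayley

variable {a : ℂ}

lemma normSq_sub_lt_normSq_add_conj (ha : 0 < a.re) {u : ℂ} (hu : 0 < u.re) :
    normSq (u - a) < normSq (u + conj a) := by
  have key : normSq (u + conj a) - normSq (u - a) = 4 * u.re * a.re := by
    simp only [normSq_apply, add_re, add_im, sub_re, sub_im, conj_re, conj_im]
    ring
  nlinarith [mul_pos hu ha]

lemma mapsTo_sub_div_add_conj (ha : 0 < a.re) :
    MapsTo (fun u => (u - a) / (u + conj a)) {u | 0 < u.re} (ball 0 1) := fun _ hu =>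
  mem_ball_zero_iff.2 (norm_div_lt_one_of_normSq_lt (normSq_sub_lt_normSq_add_conj ha hu))

lemma differentiableOn_sub_div_add_conj (ha : 0 < a.re) :
    DifferentiableOn ℂ (fun u => (u - a) / (u + conj a)) {u | 0 < u.re} :=
  DifferentiableOn.div (by fun_prop) (by fun_prop) fun _ hu =>
    ne_zero_of_normSq_lt (normSq_sub_lt_normSq_add_conj ha hu)

lemma hasDerivAt_sub_div_add_conj_self (ha : 0 < a.re) :
    HasDerivAt (fun u => (u - a) / (u + conj a)) (1 / (2 * a.re)) a := by
  have hne : a + conj a ≠ 0 := ne_zero_of_normSq_lt (normSq_sub_lt_normSq_add_conj ha ha)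
  refine (((hasDerivAt_id' a).sub_const a).div
    ((hasDerivAt_id' a).add_const (conj a)) hne).congr_deriv ?_
  rw [sub_self, zero_mul, sub_zero, one_mul, sq, div_mul_cancel_left₀ hne, add_conj]
  simp

end Cayley

theorem norm_deriv_mul_one_sub_sq_le_two_mul_re {p : ℂ → ℂ}
    (hp : DifferentiableOn ℂ p (ball 0 1)) (hre : ∀ z ∈ ball (0 : ℂ) 1, 0 < (p z).re)
    {z : ℂ} (hz : z ∈ ball (0 : ℂ) 1) :
    ‖deriv p z‖ * (1 - ‖z‖ ^ 2) ≤ 2 * (p z).re := by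
  have hz1 : ‖z‖ < 1 := mem_ball_zero_iff.1 hz
  have hpz : 0 < (p z).re := hre z hz
  set φ : ℂ → ℂ := fun w => (w + z) / (1 + conj z * w)
  set T : ℂ → ℂ := fun u => (u - p z) / (u + conj (p z))
  have hφ := mapsTo_add_div_one_add_conj_mul hz1
  have hφ0 : φ 0 = z := by simp [φ]
  have hpφ : MapsTo (p ∘ φ) (ball 0 1) {u | 0 < u.re} := fun w hw => hre _ (hφ hw)
  have hmaps : MapsTo (T ∘ p ∘ φ) (ball 0 1) (closedBall ((T ∘ p ∘ φ) 0) 1) := by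
    have h0 : (T ∘ p ∘ φ) 0 = 0 := by simp [T, hφ0]
    rw [h0]
    exact ((mapsTo_sub_div_add_conj hpz).comp hpφ).mono_right ball_subset_closedBall
  have hdiff : DifferentiableOn ℂ (T ∘ p ∘ φ) (ball 0 1) :=
    (differentiableOn_sub_div_add_conj hpz).comp
      (hp.comp (differentiableOn_add_div_one_add_conj_mul hz1) hφ) hpφ
  have hp' : HasDerivAt p (deriv p z) z :=
    (hp.differentiableAt (isOpen_ball.mem_nhds hz)).hasDerivAt
  have hderiv : HasDerivAt (T ∘ p ∘ φ) (1 / (2 * (p z).re) * (deriv p z * (1 - normSq z))) 0 :=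
    (hasDerivAt_sub_div_add_conj_self hpz).comp_of_eq 0
      (hp'.comp_of_eq 0 (hasDerivAt_add_div_one_add_conj_mul_zero z) hφ0.symm) (by simp [hφ0])
  have hschwarz := norm_deriv_le_div_of_mapsTo_ball hdiff hmaps one_pos
  rw [hderiv.deriv] at hschwarz
  have hs : 0 < 1 - ‖z‖ ^ 2 := by nlinarith [norm_nonneg z]
  have hcast : (1 : ℂ) - normSq z = ((1 - ‖z‖ ^ 2 : ℝ) : ℂ) := by
    push_cast [← Complex.sq_norm]; ring
  rw [hcast, norm_mul, norm_mul, norm_div, norm_one, div_one, norm_real, norm_mul, norm_real,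
    Real.norm_of_nonneg hs.le, Real.norm_of_nonneg hpz.le, Complex.norm_two] at hschwarz
  rwa [one_div_mul_eq_div, div_le_one (by positivity)] at hschwarz

theorem deriv_eq_dslope_add_sub_mul_deriv_dslope {𝕜 : Type*} [NontriviallyNormedField 𝕜]
    {f : 𝕜 → 𝕜} {c z : 𝕜} (h : DifferentiableAt 𝕜 (dslope f c) z) :
    deriv f z = dslope f c z + (z - c) * deriv (dslope f c) z := by
  have hf : f = fun w => f c + (w - c) * dslope f c w := by
    ext w; rw [← smul_eq_mul, sub_smul_dslope]; ring
  have hd : HasDerivAt (fun w => f c + (w - c) * dslope f c w)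
      (dslope f c z + (z - c) * deriv (dslope f c) z) z := by
    simpa using (((hasDerivAt_id' z).sub_const c).mul h.hasDerivAt).const_add (f c)
  exact (congrArg (deriv · z) hf).trans hd.deriv

lemma dslope_zero_eq_div {𝕜 : Type*} [NontriviallyNormedField 𝕜] {f : 𝕜 → 𝕜} (hf0 : f 0 = 0)
    {w : 𝕜} (hw : w ≠ 0) : dslope f 0 w = f w / w := by
  rw [dslope_of_ne f hw, slope_def_field, hf0, sub_zero, sub_zero]

lemma mul_le_mul_add_self_of_one_add_sq_div_le {r P N K : ℝ} (hr0 : 0 ≤ r) (hr1 : r < 1)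
    (hP : 0 ≤ P) (hN : N * (1 - r ^ 2) ≤ 2 * P) (hK : (1 + r ^ 2) / (1 - r ^ 2) ≤ K) :
    r * N ≤ K * P + P := by
  have hs : 0 < 1 - r ^ 2 := by nlinarith
  have hK' : 1 + r ^ 2 ≤ K * (1 - r ^ 2) := (div_le_iff₀ hs).1 hK
  nlinarith [mul_le_mul_of_nonneg_right hK' hP, mul_le_mul_of_nonneg_left hN hr0]

/-- If `f ∈ A` is a generator (`Re (f z / z) ≥ 0` on the punctured disk) and
`k r ≥ (1+r²)/(1-r²)` for `r ∈ [0,1)`, then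
`Re (k |z| * f z / z + f' z) ≥ 0` on the punctured disk. -/
theorem generator_in_large_linear_class
    (f : ℂ → ℂ) (hf : DifferentiableOn ℂ f (ball (0:ℂ) 1))
    (hf0 : f 0 = 0) (hf1 : deriv f 0 = 1)
    (hgen : ∀ z ∈ ball (0:ℂ) 1, z ≠ 0 → 0 ≤ (f z / z).re)
    (k : ℝ → ℝ) (hk : ∀ r ∈ Set.Ico (0:ℝ) 1, (1 + r^2) / (1 - r^2) ≤ k r) :
    ∀ z ∈ ball (0:ℂ) 1, z ≠ 0 → 0 ≤ ((k ‖z‖ : ℂ) * (f z / z) + deriv f z).re := by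
  intro z hz hz0
  set p := dslope f 0
  have hp : DifferentiableOn ℂ p (ball 0 1) :=
    (differentiableOn_dslope (ball_mem_nhds 0 one_pos)).2 hf
  have hp0 : p 0 = 1 := (dslope_same f 0).trans hf1
  have hpw : ∀ w ≠ 0, p w = f w / w := fun _ hw => dslope_zero_eq_div hf0 hw
  have hre_nonneg : ∀ w ∈ ball (0 : ℂ) 1, 0 ≤ (p w).re := fun w hw => by
    rcases eq_or_ne w 0 with rfl | hw0
    · simp [hp0]
    · rw [hpw w hw0]; exact hgen w hw hw0
  have hre : ∀ w ∈ ball (0 : ℂ) 1, 0 < (p w).re := fun w hw =>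
    re_pos_of_re_nonneg (convex_ball 0 1).isPreconnected isOpen_ball hp hre_nonneg
      (mem_ball_self one_pos) (by simp [hp0]) hw
  have hz1 : ‖z‖ < 1 := mem_ball_zero_iff.1 hz
  have hbound := mul_le_mul_add_self_of_one_add_sq_div_le (norm_nonneg z) hz1 (hre z hz).le
    (norm_deriv_mul_one_sub_sq_le_two_mul_re hp hre hz) (hk ‖z‖ ⟨norm_nonneg z, hz1⟩)
  rw [← hpw z hz0, deriv_eq_dslope_add_sub_mul_deriv_dslope
    (hp.differentiableAt (isOpen_ball.mem_nhds hz)), sub_zero]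
  calc 0 ≤ k ‖z‖ * (p z).re + (p z).re - ‖z * deriv p z‖ := by rwa [norm_mul, sub_nonneg]
    _ ≤ _ := by
      simp only [add_re, re_ofReal_mul]
      linarith [neg_le_of_abs_le (abs_re_le_norm (z * deriv p z))]
end

section
/- Let 0 ≤ α ≤ 1/2 and f_α(z) = z/(1-z)^{2α} (principal branch) on the unit disk D. Then inf over z ∈ D of Re(f_α(z)/z) equals 1/2^{2α}, and sup over z ∈ D of |arg(f_α(z)/z)| equals απ. -/
open Metric Complex
open scoped Real Topology

/-! With `w = 1 - z`, which ranges over the disk `‖w - 1‖ < 1`, write `w = r e^{iθ}`; the disk is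
`|θ| < π/2, r < 2 cos θ`. Then `(w^t)⁻¹ = r^{-t} e^{-itθ}`, so `|arg| = t|θ| < tπ/2` and
`Re = r^{-t} cos (tθ) ≥ (2 cos θ)^{-t} (cos θ)^t = 2^{-t}`, by `(cos θ)^t ≤ cos (tθ)` for
`0 ≤ t ≤ 1` (Bernoulli's inequality and concavity of `cos`). The real part tends to `2^{-t}` along
`z = -s`, `s → 1⁻`, and the argument to `tπ/2` along `w = cos θ e^{iθ}` (at distance `|sin θ|`
from `1`), `θ → π/2⁻`.
-/

namespace Real

theorem cos_rpow_le_cos_mul {t θ : ℝ} (ht0 : 0 ≤ t) (ht1 : t ≤ 1) (hθ : |θ| ≤ π / 2) :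
    cos θ ^ t ≤ cos (t * θ) := by
  have hθ' : θ ∈ Set.Icc (-(π / 2)) (π / 2) := abs_le.1 hθ
  have h0 : (0 : ℝ) ∈ Set.Icc (-(π / 2)) (π / 2) := by constructor <;> linarith [pi_pos]
  calc cos θ ^ t = (1 + (cos θ - 1)) ^ t := by ring_nf
    _ ≤ 1 + t * (cos θ - 1) :=
      rpow_one_add_le_one_add_mul_self (by linarith [cos_nonneg_of_mem_Icc hθ']) ht0 ht1
    _ = t • cos θ + (1 - t) • cos 0 := by rw [cos_zero, smul_eq_mul, smul_eq_mul]; ring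
    _ ≤ cos (t • θ + (1 - t) • 0) :=
      strictConcaveOn_cos_Icc.concaveOn.2 hθ' h0 ht0 (by linarith) (by ring)
    _ = cos (t * θ) := by simp

end Real

namespace Complex

theorem cpow_ofReal_eq_mul_cos_add_sin_mul_I (x : ℂ) (y : ℝ) :
    x ^ (y : ℂ) = (‖x‖ ^ y : ℝ) * (cos (arg x * y : ℝ) + sin (arg x * y : ℝ) * I) := by
  rw [← ofReal_cos, ← ofReal_sin]
  apply Complex.ext <;>
    simp only [cpow_ofReal_re, cpow_ofReal_im, add_re, add_im, ofReal_re, ofReal_im, mul_re,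
      mul_im, I_re, I_im, mul_zero, mul_one, zero_mul, add_zero, zero_add, sub_zero]

theorem arg_cpow_ofReal {x : ℂ} (hx : x ≠ 0) {y : ℝ} (hy : arg x * y ∈ Set.Ioc (-π) π) :
    arg (x ^ (y : ℂ)) = arg x * y := by
  rw [cpow_ofReal_eq_mul_cos_add_sin_mul_I]
  exact arg_mul_cos_add_sin_mul_I (by positivity) hy

theorem re_inv_cpow_ofReal (x : ℂ) (y : ℝ) :
    ((x ^ (y : ℂ))⁻¹).re = ‖x‖ ^ (-y) * Real.cos (arg x * y) := by
  rw [← cpow_neg, ← ofReal_neg, cpow_ofReal_re, mul_neg, Real.cos_neg]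

theorem arg_inv_cpow_ofReal {x : ℂ} (hx : x ≠ 0) {y : ℝ} (hy : |arg x * y| < π) :
    arg ((x ^ (y : ℂ))⁻¹) = -(arg x * y) := by
  obtain ⟨h1, h2⟩ := abs_lt.1 hy
  have hy' : arg x * -y ∈ Set.Ioc (-π) π := by
    rw [mul_neg]
    exact ⟨by linarith, by linarith⟩
  rw [← cpow_neg, ← ofReal_neg, arg_cpow_ofReal hx hy', mul_neg]

theorem abs_arg_inv_cpow_ofReal {w : ℂ} (hw : 0 < w.re) {t : ℝ} (ht0 : 0 ≤ t) (ht1 : t ≤ 1) :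
    |arg ((w ^ (t : ℂ))⁻¹)| = t * |arg w| := by
  have harg : |arg w| < π / 2 := abs_arg_lt_pi_div_two_iff.2 (Or.inl hw)
  have hw0 : w ≠ 0 := by rintro rfl; simp at hw
  have hprod : |arg w * t| = t * |arg w| := by rw [abs_mul, abs_of_nonneg ht0, mul_comm]
  rw [arg_inv_cpow_ofReal hw0 (by nlinarith [Real.pi_pos]), abs_neg, hprod]

theorem re_pos_of_norm_sub_one_lt_one {w : ℂ} (hw : ‖w - 1‖ < 1) : 0 < w.re := by
  have := (abs_re_le_norm (w - 1)).trans_lt hw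
  rw [sub_re, one_re] at this
  linarith [(abs_lt.1 this).1]

theorem norm_lt_two_mul_cos_arg {w : ℂ} (hw : ‖w - 1‖ < 1) : ‖w‖ < 2 * Real.cos (arg w) := by
  have hw0 : w ≠ 0 := by rintro rfl; simp at hw
  have hpos : 0 < ‖w‖ := norm_pos_iff.2 hw0
  have hsq : ‖w‖ ^ 2 < 2 * w.re := by
    have := (sq_lt_one_iff_abs_lt_one ‖w - 1‖).2 (by rwa [abs_norm])
    rw [Complex.sq_norm, normSq_apply] at this ⊢
    simp only [sub_re, one_re, sub_im, one_im, sub_zero] at this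
    nlinarith
  rw [cos_arg hw0, mul_div_assoc', lt_div_iff₀ hpos]
  nlinarith

theorem two_rpow_neg_le_re_inv_cpow_ofReal {w : ℂ} (hw : ‖w - 1‖ < 1) {t : ℝ} (ht0 : 0 ≤ t)
    (ht1 : t ≤ 1) : (2 : ℝ) ^ (-t) ≤ ((w ^ (t : ℂ))⁻¹).re := by
  have hw0 : w ≠ 0 := by rintro rfl; simp at hw
  have harg : |arg w| < π / 2 :=
    abs_arg_lt_pi_div_two_iff.2 (Or.inl (re_pos_of_norm_sub_one_lt_one hw))
  have hcos : 0 < Real.cos (arg w) := Real.cos_pos_of_mem_Ioo (abs_lt.1 harg)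
  calc (2 : ℝ) ^ (-t) = (2 * Real.cos (arg w)) ^ (-t) * Real.cos (arg w) ^ t := by
        rw [Real.mul_rpow zero_le_two hcos.le, mul_assoc, ← Real.rpow_add hcos, neg_add_cancel,
          Real.rpow_zero, mul_one]
    _ ≤ ‖w‖ ^ (-t) * Real.cos (arg w * t) := by
        gcongr ?_ * ?_
        · exact Real.rpow_le_rpow_of_nonpos (norm_pos_iff.2 hw0) (norm_lt_two_mul_cos_arg hw).le
            (neg_nonpos.2 ht0)
        · rw [mul_comm]
          exact Real.cos_rpow_le_cos_mul ht0 ht1 harg.le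
    _ = ((w ^ (t : ℂ))⁻¹).re := (re_inv_cpow_ofReal w t).symm

theorem exists_norm_sub_one_lt_one_arg_eq {θ : ℝ} (hθ : |θ| < π / 2) :
    ∃ w : ℂ, ‖w - 1‖ < 1 ∧ arg w = θ := by
  have hcos : 0 < Real.cos θ := Real.cos_pos_of_mem_Ioo (abs_lt.1 hθ)
  have hsin : |Real.sin θ| < 1 := by
    rw [← sq_lt_one_iff_abs_lt_one]
    nlinarith [Real.sin_sq_add_cos_sq θ]
  have hdiff : (Real.cos θ : ℂ) * (cos θ + sin θ * I) - 1 =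
      Real.sin θ * (cos (θ + π / 2 : ℝ) + sin (θ + π / 2 : ℝ) * I) := by
    push_cast
    rw [cos_add_pi_div_two, sin_add_pi_div_two]
    linear_combination sin_sq_add_cos_sq (θ : ℂ)
  refine ⟨Real.cos θ * (cos θ + sin θ * I), ?_, ?_⟩
  · rwa [hdiff, norm_mul, norm_cos_add_sin_mul_I, mul_one, norm_real, Real.norm_eq_abs]
  · obtain ⟨h1, h2⟩ := abs_lt.1 hθ
    exact arg_mul_cos_add_sin_mul_I hcos ⟨by linarith [Real.pi_pos], by linarith [Real.pi_pos]⟩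

theorem isGLB_re_inv_one_sub_cpow_ofReal {t : ℝ} (ht0 : 0 ≤ t) (ht1 : t ≤ 1) :
    IsGLB {x : ℝ | ∃ z ∈ ball (0 : ℂ) 1, x = (((1 - z) ^ (t : ℂ))⁻¹).re} (2 ^ (-t)) := by
  refine isGLB_of_mem_closure ?_ ?_
  · rintro x ⟨z, hz, rfl⟩
    exact two_rpow_neg_le_re_inv_cpow_ofReal (by simpa using hz) ht0 ht1
  · have hcont : ContinuousAt (fun s : ℝ => (1 + s) ^ (-t)) 1 :=
      (continuousAt_const.add continuousAt_id).rpow_const (Or.inl (by norm_num))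
    refine mem_closure_of_tendsto (b := 𝓝[<] (1 : ℝ))
      (by simpa [one_add_one_eq_two] using hcont.tendsto.mono_left nhdsWithin_le_nhds) ?_
    filter_upwards [Ioo_mem_nhdsLT one_pos] with s hs
    refine ⟨-s, by simpa [abs_of_pos hs.1] using hs.2, ?_⟩
    rw [sub_neg_eq_add, ← ofReal_one, ← ofReal_add, ← ofReal_cpow (by linarith [hs.1]),
      ← ofReal_inv, ofReal_re, Real.rpow_neg (by linarith [hs.1])]

theorem isLUB_abs_arg_inv_one_sub_cpow_ofReal {t : ℝ} (ht0 : 0 ≤ t) (ht1 : t ≤ 1) :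
    IsLUB {x : ℝ | ∃ z ∈ ball (0 : ℂ) 1, x = |arg (((1 - z) ^ (t : ℂ))⁻¹)|} (t * (π / 2)) := by
  refine isLUB_of_mem_closure ?_ ?_
  · rintro x ⟨z, hz, rfl⟩
    have hre := re_pos_of_norm_sub_one_lt_one (w := 1 - z) (by simpa using hz)
    rw [abs_arg_inv_cpow_ofReal hre ht0 ht1]
    exact mul_le_mul_of_nonneg_left (abs_arg_lt_pi_div_two_iff.2 (Or.inl hre)).le ht0
  · refine mem_closure_of_tendsto (b := 𝓝[<] (π / 2))
      ((continuous_const_mul t).tendsto (π / 2) |>.mono_left nhdsWithin_le_nhds) ?_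
    filter_upwards [Ioo_mem_nhdsLT (by positivity : (0 : ℝ) < π / 2)] with θ hθ
    obtain ⟨w, hw, harg⟩ := exists_norm_sub_one_lt_one_arg_eq
      (abs_lt.2 ⟨by linarith [hθ.1, Real.pi_pos], hθ.2⟩)
    refine ⟨1 - w, by rwa [mem_ball_zero_iff, norm_sub_rev], ?_⟩
    rw [sub_sub_cancel, abs_arg_inv_cpow_ofReal (re_pos_of_norm_sub_one_lt_one hw) ht0 ht1, harg,
      abs_of_pos hθ.1]

end Complex

/-- For the totally extremal starlike function `f_α z = z / (1-z)^{2α}` with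
`0 ≤ α ≤ 1/2`: the infimum of `Re (f_α z / z)` over the disk is `1/2^{2α}` and the
supremum of `|arg (f_α z / z)|` over the disk is `απ`. -/
theorem starlike_extremal_K_and_B
    (α : ℝ) (hα : α ∈ Set.Icc (0:ℝ) (1/2)) :
    IsGLB {x : ℝ | ∃ z ∈ ball (0:ℂ) 1,
        x = (((1 - z) ^ ((2*α : ℝ) : ℂ))⁻¹).re} (1 / 2 ^ (2*α)) ∧
    IsLUB {x : ℝ | ∃ z ∈ ball (0:ℂ) 1,
        x = |Complex.arg (((1 - z) ^ ((2*α : ℝ) : ℂ))⁻¹)|} (α * Real.pi) := by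
  obtain ⟨hα0, hα1⟩ := hα
  have ht0 : 0 ≤ 2 * α := by linarith
  have ht1 : 2 * α ≤ 1 := by linarith
  rw [one_div, ← Real.rpow_neg zero_le_two, show α * π = 2 * α * (π / 2) by ring]
  exact ⟨isGLB_re_inv_one_sub_cpow_ofReal ht0 ht1, isLUB_abs_arg_inv_one_sub_cpow_ofReal ht0 ht1⟩
end

section
/- For α ∈ (0, 1/3], let f_α(z) = z/(1 + (1+α)z + α z²) on the unit disk D. Then the infimum over z ∈ D of Re(f_α(z)/z) equals (1-3α)/(2α² - 4α + 2) ≥ 0, and the supremum over z ∈ D of |arg(f_α(z)/z)| equals π/2. -/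
/-!
Since `1 + (1+α)z + αz² = (1+z)(1+αz)`, partial fractions give
`f_α(z)/z = ((1+z)⁻¹ - α(1+αz)⁻¹)/(1-α)`. On the open disk `Re (1+z)⁻¹ > 1/2` and
`Re (1+αz)⁻¹ ≤ (1-α)⁻¹`, which is the lower bound. On the unit circle `Re (1+z)⁻¹ = 1/2`
exactly, so as `z = e^{iθ}` tends to `-1` the real part tends to the bound while
`|f_α(z)/z| → ∞`, hence `|arg (f_α(z)/z)| → π/2`; these boundary values are limits of interior
values. Positivity of the real part gives `|arg| < π/2` inside the disk.
-/

open Metric Complex Filter Topology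
open scoped Real

theorem mem_closure_image_of_tendsto {X Y ι : Type*} [TopologicalSpace X] [TopologicalSpace Y]
    {f : X → Y} {s : Set X} {γ : ι → X} {l : Filter ι} [l.NeBot] {y : Y}
    (hγ : ∀ᶠ t in l, γ t ∈ closure s ∧ ContinuousWithinAt f s (γ t))
    (hf : Tendsto (f ∘ γ) l (𝓝 y)) : y ∈ closure (f '' s) :=
  isClosed_closure.mem_of_tendsto hf (hγ.mono fun _ ht => ht.2.mem_closure_image ht.1)

theorem inv_one_add_mul_one_add_mul_eq {K : Type*} [Field K] {a z : K} (hz : 1 + z ≠ 0)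
    (haz : 1 + a * z ≠ 0) (ha : 1 - a ≠ 0) :
    ((1 + z) * (1 + a * z))⁻¹ = ((1 + z)⁻¹ - a * (1 + a * z)⁻¹) / (1 - a) := by
  rw [eq_div_iff ha, mul_inv]
  linear_combination (-a * (1 + a * z)⁻¹) * mul_inv_cancel₀ hz + (1 + z)⁻¹ * mul_inv_cancel₀ haz

namespace Complex

theorem abs_arg_eq_arccos {w : ℂ} (hw : w ≠ 0) : |arg w| = Real.arccos (w.re / ‖w‖) := by
  rw [← cos_arg hw, ← Real.cos_abs, Real.arccos_cos (abs_nonneg _) (abs_arg_le_pi _)]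

theorem continuousAt_abs_arg {w : ℂ} (hw : w ≠ 0) : ContinuousAt (fun w => |arg w|) w := by
  have hnorm : ‖w‖ ≠ 0 := norm_ne_zero_iff.mpr hw
  have heq : (fun w => |arg w|) =ᶠ[𝓝 w] fun w => Real.arccos (w.re / ‖w‖) :=
    (isOpen_ne.eventually_mem hw).mono fun _ => abs_arg_eq_arccos
  refine ContinuousAt.congr ?_ heq.symm
  exact Real.continuous_arccos.continuousAt.comp
    (continuous_re.continuousAt.div continuous_norm.continuousAt hnorm)

theorem half_lt_re_inv_one_add {z : ℂ} (hz : ‖z‖ < 1) : 1 / 2 < ((1 + z)⁻¹).re := by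
  have hnormSq : z.re * z.re + z.im * z.im < 1 := by
    rwa [← sq_lt_one_iff₀ (norm_nonneg z), Complex.sq_norm, normSq_apply] at hz
  have hre : 0 < 1 + z.re := by nlinarith
  rw [inv_re, normSq_apply]
  simp only [add_re, one_re, add_im, one_im]
  rw [lt_div_iff₀ (by nlinarith)]
  nlinarith

theorem re_inv_one_add_of_norm_eq_one {z : ℂ} (hz : ‖z‖ = 1) (hz' : z ≠ -1) :
    ((1 + z)⁻¹).re = 1 / 2 := by
  have hnormSq : z.re * z.re + z.im * z.im = 1 := by
    rw [← normSq_apply, ← Complex.sq_norm, hz, one_pow]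
  have hne : 1 + z ≠ 0 := fun h => hz' (eq_neg_of_add_eq_zero_right h)
  rw [inv_re, div_eq_iff (normSq_pos.mpr hne).ne']
  simp only [normSq_apply, add_re, one_re, add_im, one_im]
  linear_combination (-1/2 : ℝ) * hnormSq

theorem re_inv_one_add_le {z : ℂ} (hz : ‖z‖ < 1) : ((1 + z)⁻¹).re ≤ (1 - ‖z‖)⁻¹ := by
  have hlower : 1 - ‖z‖ ≤ ‖1 + z‖ := by
    simpa using norm_sub_norm_le (1 : ℂ) (-z)
  calc ((1 + z)⁻¹).re ≤ ‖(1 + z)⁻¹‖ := re_le_norm _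
    _ = ‖1 + z‖⁻¹ := norm_inv _
    _ ≤ (1 - ‖z‖)⁻¹ := inv_anti₀ (by linarith) hlower

theorem exp_mul_I_ne_neg_one {θ : ℝ} (hθ : θ ∈ Set.Ioo 0 π) : exp (θ * I) ≠ -1 := by
  intro h
  have him := exp_ofReal_mul_I_im θ
  rw [h] at him
  simp only [neg_im, one_im, neg_zero] at him
  exact (Real.sin_pos_of_pos_of_lt_pi hθ.1 hθ.2).ne him

end Complex

/-- `f_α z / z` for Aksentiev's extremal function `f_α z = z / (1 + (1+α)z + αz²)`. -/
noncomputable def aksentievQuotient (α : ℝ) (z : ℂ) : ℂ := (1 + (1 + (α:ℂ)) * z + (α:ℂ) * z^2)⁻¹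

section Aksentiev

variable {α : ℝ} {z : ℂ}

theorem aksentievQuotient_eq_inv_mul (α : ℝ) (z : ℂ) :
    aksentievQuotient α z = ((1 + z) * (1 + α * z))⁻¹ := by
  rw [aksentievQuotient]; ring

theorem one_add_ofReal_mul_ne_zero (hα0 : 0 ≤ α) (hα1 : α < 1) (hz : ‖z‖ ≤ 1) :
    1 + α * z ≠ 0 := by
  intro h
  have hnorm : ‖(α : ℂ) * z‖ = 1 := by rw [eq_neg_of_add_eq_zero_right h, norm_neg, norm_one]
  rw [norm_mul, norm_real, Real.norm_of_nonneg hα0] at hnorm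
  nlinarith [norm_nonneg z]

theorem one_add_mul_one_add_ofReal_mul_ne_zero (hα0 : 0 ≤ α) (hα1 : α < 1) (hz : ‖z‖ ≤ 1)
    (hz' : z ≠ -1) : (1 + z) * (1 + α * z) ≠ 0 :=
  mul_ne_zero (fun h => hz' (eq_neg_of_add_eq_zero_right h))
    (one_add_ofReal_mul_ne_zero hα0 hα1 hz)

theorem aksentievQuotient_ne_zero (hα0 : 0 ≤ α) (hα1 : α < 1) (hz : ‖z‖ ≤ 1) (hz' : z ≠ -1) :
    aksentievQuotient α z ≠ 0 := by
  rw [aksentievQuotient_eq_inv_mul]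
  exact inv_ne_zero (one_add_mul_one_add_ofReal_mul_ne_zero hα0 hα1 hz hz')

theorem continuousAt_aksentievQuotient (hα0 : 0 ≤ α) (hα1 : α < 1) (hz : ‖z‖ ≤ 1)
    (hz' : z ≠ -1) : ContinuousAt (aksentievQuotient α) z := by
  rw [funext (aksentievQuotient_eq_inv_mul α)]
  exact (by fun_prop : Continuous fun z : ℂ => (1 + z) * (1 + α * z)).continuousAt.inv₀
    (one_add_mul_one_add_ofReal_mul_ne_zero hα0 hα1 hz hz')

theorem re_aksentievQuotient (hα : α ≠ 1) (hz : z ≠ -1) (hαz : 1 + α * z ≠ 0) :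
    (aksentievQuotient α z).re = (((1 + z)⁻¹).re - α * ((1 + α * z)⁻¹).re) / (1 - α) := by
  have h1z : 1 + z ≠ 0 := fun h => hz (eq_neg_of_add_eq_zero_right h)
  have h1α : (1 : ℂ) - α ≠ 0 := by exact_mod_cast sub_ne_zero.mpr hα.symm
  rw [aksentievQuotient_eq_inv_mul, inv_one_add_mul_one_add_mul_eq h1z hαz h1α, ← ofReal_one,
    ← ofReal_sub, div_ofReal_re, sub_re, re_ofReal_mul, ofReal_one]

theorem aksentiev_bound_eq (hα : α ≠ 1) :
    (1 - 3*α) / (2*α^2 - 4*α + 2) = (1 / 2 - α * (1 - α)⁻¹) / (1 - α) := by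
  rw [show 2*α^2 - 4*α + 2 = 2 * (1 - α)^2 by ring]
  field_simp [sub_ne_zero.mpr hα.symm]
  ring

theorem lt_re_aksentievQuotient (hα0 : 0 ≤ α) (hα1 : α < 1) (hz : ‖z‖ < 1) :
    (1 - 3*α) / (2*α^2 - 4*α + 2) < (aksentievQuotient α z).re := by
  have hαz : ‖(α : ℂ) * z‖ ≤ α := by
    rw [norm_mul, norm_real, Real.norm_of_nonneg hα0]
    exact mul_le_of_le_one_right hα0 hz.le
  have hhalf := half_lt_re_inv_one_add hz
  have hinv : ((1 + α * z)⁻¹).re ≤ (1 - α)⁻¹ :=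
    (re_inv_one_add_le (hαz.trans_lt hα1)).trans (inv_anti₀ (by linarith) (by linarith))
  rw [re_aksentievQuotient hα1.ne (fun h => by simp [h] at hz)
    (one_add_ofReal_mul_ne_zero hα0 hα1 hz.le), aksentiev_bound_eq hα1.ne]
  exact div_lt_div_of_pos_right (by nlinarith [mul_le_mul_of_nonneg_left hinv hα0])
    (by linarith)

theorem eventually_continuousAt_aksentievQuotient_exp (hα0 : 0 ≤ α) (hα1 : α < 1) :
    ∀ᶠ θ : ℝ in 𝓝[<] π, exp (θ * I) ∈ closure (ball (0:ℂ) 1) ∧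
      ContinuousAt (aksentievQuotient α) (exp (θ * I)) ∧
      aksentievQuotient α (exp (θ * I)) ≠ 0 := by
  filter_upwards [Ioo_mem_nhdsLT Real.pi_pos] with θ hθ
  have hz := (norm_exp_ofReal_mul_I θ).le
  have hz' := exp_mul_I_ne_neg_one hθ
  exact ⟨by rwa [closure_ball _ one_ne_zero, mem_closedBall_zero_iff],
    continuousAt_aksentievQuotient hα0 hα1 hz hz', aksentievQuotient_ne_zero hα0 hα1 hz hz'⟩

theorem tendsto_re_aksentievQuotient_exp (hα0 : 0 ≤ α) (hα1 : α < 1) :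
    Tendsto (fun θ : ℝ => (aksentievQuotient α (exp (θ * I))).re) (𝓝[<] π)
      (𝓝 ((1 - 3*α) / (2*α^2 - 4*α + 2))) := by
  have h1α : (1 : ℂ) + α * exp (π * I) ≠ 0 := by
    rw [exp_pi_mul_I]
    exact_mod_cast (by linarith : 1 + α * -1 ≠ 0)
  have hcont : ContinuousAt
      (fun θ : ℝ => (1 / 2 - α * ((1 + α * exp (θ * I))⁻¹).re) / (1 - α)) π := by
    refine ((continuous_re.continuousAt.comp ?_).const_mul α |>.const_sub _).div_const _
    exact (by fun_prop : Continuous fun θ : ℝ => 1 + α * exp (θ * I)).continuousAt.inv₀ h1α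
  have hvalue : (1 / 2 - α * ((1 + α * exp (π * I))⁻¹).re) / (1 - α)
      = (1 - 3*α) / (2*α^2 - 4*α + 2) := by
    rw [exp_pi_mul_I, show (1 : ℂ) + α * -1 = ((1 - α : ℝ) : ℂ) by push_cast; ring,
      ← ofReal_inv, ofReal_re, aksentiev_bound_eq hα1.ne]
  refine (hvalue ▸ hcont.tendsto.mono_left nhdsWithin_le_nhds).congr' ?_
  filter_upwards [Ioo_mem_nhdsLT Real.pi_pos] with θ hθ
  have hz := norm_exp_ofReal_mul_I θ
  have hz' := exp_mul_I_ne_neg_one hθ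
  rw [re_aksentievQuotient hα1.ne hz' (one_add_ofReal_mul_ne_zero hα0 hα1 hz.le),
    re_inv_one_add_of_norm_eq_one hz hz']

theorem tendsto_inv_norm_aksentievQuotient_exp (α : ℝ) :
    Tendsto (fun θ : ℝ => ‖aksentievQuotient α (exp (θ * I))‖⁻¹) (𝓝 π) (𝓝 0) := by
  simp only [aksentievQuotient_eq_inv_mul, norm_inv, inv_inv]
  have hcont : Continuous fun θ : ℝ => ‖(1 + exp (θ * I)) * (1 + α * exp (θ * I))‖ := by
    fun_prop
  simpa [exp_pi_mul_I] using hcont.tendsto π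

theorem tendsto_abs_arg_aksentievQuotient_exp (hα0 : 0 ≤ α) (hα1 : α < 1) :
    Tendsto (fun θ : ℝ => |arg (aksentievQuotient α (exp (θ * I)))|) (𝓝[<] π)
      (𝓝 (π / 2)) := by
  have hcos : Tendsto (fun θ : ℝ => (aksentievQuotient α (exp (θ * I))).re /
      ‖aksentievQuotient α (exp (θ * I))‖) (𝓝[<] π) (𝓝 0) := by
    simpa [div_eq_mul_inv] using (tendsto_re_aksentievQuotient_exp hα0 hα1).mul
      ((tendsto_inv_norm_aksentievQuotient_exp α).mono_left nhdsWithin_le_nhds)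
  have harccos := (Real.continuous_arccos.tendsto 0).comp hcos
  rw [Real.arccos_zero] at harccos
  refine harccos.congr' ?_
  filter_upwards [Ioo_mem_nhdsLT Real.pi_pos] with θ hθ
  exact (abs_arg_eq_arccos (aksentievQuotient_ne_zero hα0 hα1
    (norm_exp_ofReal_mul_I θ).le (exp_mul_I_ne_neg_one hθ))).symm

end Aksentiev

/-- For Aksentiev's extremal function `f_α z = z/(1+(1+α)z+αz²)`, `α ∈ (0,1/3]`:
the infimum of `Re (f_α z / z)` over the disk equals `(1-3α)/(2α²-4α+2) ≥ 0` and the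
supremum of `|arg (f_α z / z)|` equals `π/2`. -/
theorem aksentiev_extremal_K_and_B
    (α : ℝ) (hα : α ∈ Set.Ioc (0:ℝ) (1/3)) :
    IsGLB {x : ℝ | ∃ z ∈ ball (0:ℂ) 1,
        x = ((1 + (1 + (α:ℂ)) * z + (α:ℂ) * z^2)⁻¹).re}
      ((1 - 3*α) / (2*α^2 - 4*α + 2)) ∧
    0 ≤ (1 - 3*α) / (2*α^2 - 4*α + 2) ∧
    IsLUB {x : ℝ | ∃ z ∈ ball (0:ℂ) 1,
        x = |Complex.arg ((1 + (1 + (α:ℂ)) * z + (α:ℂ) * z^2)⁻¹)|} (Real.pi / 2) := by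
  obtain ⟨hα_pos, hα_le⟩ := hα
  have hα_lt_one : α < 1 := by linarith
  have hbound : 0 ≤ (1 - 3*α) / (2*α^2 - 4*α + 2) := div_nonneg (by linarith) (by nlinarith)
  have hre (z : ℂ) (hz : z ∈ ball (0:ℂ) 1) :
      (1 - 3*α) / (2*α^2 - 4*α + 2) < (aksentievQuotient α z).re :=
    lt_re_aksentievQuotient hα_pos.le hα_lt_one (mem_ball_zero_iff.mp hz)
  have hboundary := eventually_continuousAt_aksentievQuotient_exp hα_pos.le hα_lt_one
  have himage (F : ℂ → ℝ) : {x | ∃ z ∈ ball (0:ℂ) 1, x = F z} = F '' ball 0 1 :=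
    Set.ext fun _ => by simp only [Set.mem_ofPred_eq, Set.mem_image, eq_comm]
  refine ⟨?_, hbound, ?_⟩
  · rw [himage]
    refine isGLB_of_mem_closure ?_ ?_
    · rintro _ ⟨z, hz, rfl⟩
      exact (hre z hz).le
    · exact mem_closure_image_of_tendsto (hboundary.mono fun _ h =>
        ⟨h.1, (continuous_re.continuousAt.comp h.2.1).continuousWithinAt⟩)
        (tendsto_re_aksentievQuotient_exp hα_pos.le hα_lt_one)
  · rw [himage]
    refine isLUB_of_mem_closure ?_ ?_
    · rintro _ ⟨z, hz, rfl⟩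
      exact (abs_arg_lt_pi_div_two_iff.mpr (Or.inl (hbound.trans_lt (hre z hz)))).le
    · exact mem_closure_image_of_tendsto (hboundary.mono fun _ h =>
        ⟨h.1, ((continuousAt_abs_arg h.2.2).comp h.2.1).continuousWithinAt⟩)
        (tendsto_abs_arg_aksentievQuotient_exp hα_pos.le hα_lt_one)
end

section
/- Let α < 1 and let f ∈ A satisfy |α f(z)/z + (1-α) f'(z) - 1| ≤ (2-α)|z| on D (equivalently via Schwarz's lemma, ≤ 2-α with equality of the bound at the boundary). Then there exists a holomorphic self-map ω of D with ω(0)=0 such that f(z) = z(1 + ((2-α)/(1-α)) ∫₀¹ s^{α/(1-α)} ω(sz) ds), and consequently |f(z)/z - 1| ≤ 1 for all z ∈ D \ {0}. -/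
/-!
Write `g = f(z)/z` (that is, `dslope f 0`) and `ω = (α g + (1-α) f' - 1)/(2-α)`; the hypothesis
says exactly `|ω(w)| ≤ |w|`. Since `f' = g + z g'`, the function `ω` satisfies the Euler-type
equation `g + (1-α) z g' - 1 = (2-α) ω`, which makes
`d/ds [s^{1/(1-α)} (g(sz) - 1)] = (2-α)/(1-α) · s^{α/(1-α)} ω(sz)`.
Integrating over `[0,1]` gives the representation, and `|ω(sz)| ≤ s|z|` together with
`∫₀¹ s^{1/(1-α)} ds = (1-α)/(2-α)` gives `|g(z) - 1| ≤ |z|`.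
-/

open Metric Complex

lemma intervalIntegrable_ofReal_rpow {β : ℝ} (hβ : -1 < β) (a b : ℝ) :
    IntervalIntegrable (fun s : ℝ => ((s ^ β : ℝ) : ℂ)) MeasureTheory.volume a b :=
  let h := intervalIntegral.intervalIntegrable_rpow' (a := a) (b := b) hβ
  ⟨h.1.ofReal, h.2.ofReal⟩

lemma ofReal_mul_mem_ball {r s : ℝ} (hs : s ∈ Set.Icc (0 : ℝ) 1) {z : ℂ} (hz : z ∈ ball (0 : ℂ) r) :
    (s : ℂ) * z ∈ ball (0 : ℂ) r := by
  simpa [Complex.real_smul] using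
    (convex_ball (0 : ℂ) r).smul_mem_of_zero_mem (mem_ball_self (pos_of_mem_ball hz)) hz hs

lemma continuousOn_comp_ofReal_mul {r : ℝ} {h : ℂ → ℂ} (hh : ContinuousOn h (ball (0 : ℂ) r))
    {z : ℂ} (hz : z ∈ ball (0 : ℂ) r) :
    ContinuousOn (fun s : ℝ => h (s * z)) (Set.Icc 0 1) :=
  hh.comp (by fun_prop) fun _ hs => ofReal_mul_mem_ball hs hz

lemma intervalIntegrable_rpow_mul_comp {β r : ℝ} (hβ : -1 < β) {h : ℂ → ℂ}
    (hh : ContinuousOn h (ball (0 : ℂ) r)) {z : ℂ} (hz : z ∈ ball (0 : ℂ) r) :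
    IntervalIntegrable (fun s : ℝ => ((s ^ β : ℝ) : ℂ) * h (s * z)) MeasureTheory.volume 0 1 :=
  (intervalIntegrable_ofReal_rpow hβ 0 1).mul_continuousOn <| by
    simpa [Set.uIcc_of_le zero_le_one] using continuousOn_comp_ofReal_mul hh hz

lemma norm_integral_rpow_mul_comp_le {β r : ℝ} (hβ : -1 < β) {h : ℂ → ℂ}
    (hh_le : ∀ w ∈ ball (0 : ℂ) r, ‖h w‖ ≤ ‖w‖) {z : ℂ} (hz : z ∈ ball (0 : ℂ) r) :
    ‖∫ s in (0 : ℝ)..1, ((s ^ β : ℝ) : ℂ) * h (s * z)‖ ≤ ‖z‖ / (β + 2) := by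
  have hpointwise : ∀ s ∈ Set.Ioc (0 : ℝ) 1,
      ‖((s ^ β : ℝ) : ℂ) * h (s * z)‖ ≤ ‖z‖ * s ^ (β + 1) := by
    intro s ⟨hs0, hs1⟩
    have hsz := hh_le _ (ofReal_mul_mem_ball ⟨hs0.le, hs1⟩ hz)
    rw [norm_mul, norm_real, Real.norm_of_nonneg (by positivity), Real.rpow_add_one hs0.ne']
    rw [norm_mul, norm_real, Real.norm_of_nonneg hs0.le] at hsz
    calc s ^ β * ‖h (s * z)‖ ≤ s ^ β * (s * ‖z‖) := by gcongr
      _ = ‖z‖ * (s ^ β * s) := by ring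
  calc ‖∫ s in (0 : ℝ)..1, ((s ^ β : ℝ) : ℂ) * h (s * z)‖
      ≤ ∫ s in (0 : ℝ)..1, ‖z‖ * s ^ (β + 1) :=
        intervalIntegral.norm_integral_le_of_norm_le zero_le_one
          (Filter.Eventually.of_forall hpointwise)
          ((intervalIntegral.intervalIntegrable_rpow' (by linarith)).const_mul _)
    _ = ‖z‖ / (β + 2) := by
        rw [intervalIntegral.integral_const_mul, integral_rpow (.inl (by linarith))]
        have : β + 1 + 1 ≠ 0 := by linarith
        simp [Real.zero_rpow this]
        ring

lemma eq_add_integral_rpow_mul_deriv {β r : ℝ} (hβ : -1 < β) {g : ℂ → ℂ}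
    (hg : DifferentiableOn ℂ g (ball (0 : ℂ) r)) {z : ℂ} (hz : z ∈ ball (0 : ℂ) r) :
    g z = g 0 + ∫ s in (0 : ℝ)..1, ((s ^ β : ℝ) : ℂ) *
      ((β + 1) * (g (s * z) - g 0) + s * z * deriv g (s * z)) := by
  set F : ℝ → ℂ := fun t => ((t ^ (β + 1) : ℝ) : ℂ) * (g (t * z) - g 0)
  have hF_cont : ContinuousOn F (Set.Icc 0 1) :=
    (continuous_ofReal.comp (Real.continuous_rpow_const (by linarith))).continuousOn.mul
      ((continuousOn_comp_ofReal_mul hg.continuousOn hz).sub continuousOn_const)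
  have hF_deriv : ∀ s ∈ Set.Ioo (0 : ℝ) 1, HasDerivAt F (((s ^ β : ℝ) : ℂ) *
      ((β + 1) * (g (s * z) - g 0) + s * z * deriv g (s * z))) s := by
    intro s ⟨hs0, hs1⟩
    have hgd : HasDerivAt g (deriv g (s * z)) (s * z) :=
      (hg.differentiableAt
        (isOpen_ball.mem_nhds (ofReal_mul_mem_ball ⟨hs0.le, hs1.le⟩ hz))).hasDerivAt
    have hcomp : HasDerivAt (fun t : ℝ => g (t * z)) (deriv g (s * z) * z) s := by
      have := hgd.comp (s : ℂ) ((hasDerivAt_id (s : ℂ)).mul_const z)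
      simpa using this.comp_ofReal
    have hpow := (Real.hasDerivAt_rpow_const (p := β + 1) (.inl hs0.ne')).ofReal_comp
    refine (hpow.mul (hcomp.sub_const (g 0))).congr_deriv ?_
    rw [add_sub_cancel_right, Real.rpow_add_one hs0.ne']
    push_cast
    ring
  have hint := intervalIntegral.integral_eq_sub_of_hasDeriv_right_of_le zero_le_one hF_cont
    (fun s hs => (hF_deriv s hs).hasDerivWithinAt)
    (intervalIntegrable_rpow_mul_comp hβ (h := fun w => (β + 1) * (g w - g 0) + w * deriv g w)
      ((continuousOn_const.mul (hg.continuousOn.sub continuousOn_const)).add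
        (continuousOn_id.mul (hg.deriv isOpen_ball).continuousOn)) hz)
  rw [hint]
  simp [F, Real.zero_rpow (by linarith : β + 1 ≠ 0)]

lemma deriv_eq_dslope_add_mul_deriv_dslope {f : ℂ → ℂ} {a w : ℂ}
    (hg : DifferentiableAt ℂ (dslope f a) w) :
    deriv f w = dslope f a w + (w - a) * deriv (dslope f a) w := by
  have hf : f = fun w => f a + (w - a) * dslope f a w :=
    funext fun w => by rw [← smul_eq_mul, sub_smul_dslope, add_sub_cancel]
  have hderiv : HasDerivAt (fun w => f a + (w - a) * dslope f a w)
      (1 * dslope f a w + (w - a) * deriv (dslope f a) w) w :=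
    (((hasDerivAt_id w).sub_const a).mul hg.hasDerivAt).const_add (f a)
  conv_lhs => rw [hf]
  rw [hderiv.deriv, one_mul]

lemma eq_mul_dslope_of_eq_zero {f : ℂ → ℂ} (hf0 : f 0 = 0) (z : ℂ) : f z = z * dslope f 0 z := by
  simpa [hf0] using (sub_smul_dslope f 0 z).symm

lemma dslope_eq_div_of_eq_zero {f : ℂ → ℂ} (hf0 : f 0 = 0) {z : ℂ} (hz : z ≠ 0) :
    dslope f 0 z = f z / z := by
  rw [eq_mul_dslope_of_eq_zero hf0 z, mul_div_cancel_left₀ _ hz]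

noncomputable def schwarzFunction (α : ℝ) (f : ℂ → ℂ) (w : ℂ) : ℂ :=
  (α * dslope f 0 w + (1 - α) * deriv f w - 1) / (2 - α)

lemma neg_one_lt_div_one_sub {α : ℝ} (hα : α < 1) : -1 < α / (1 - α) := by
  rw [lt_div_iff₀ (by linarith)]
  linarith

section schwarzFunction

variable {α : ℝ} {f : ℂ → ℂ}

lemma differentiableOn_schwarzFunction (hf : DifferentiableOn ℂ f (ball (0 : ℂ) 1)) :
    DifferentiableOn ℂ (schwarzFunction α f) (ball (0 : ℂ) 1) :=
  ((((differentiableOn_dslope (ball_mem_nhds _ one_pos)).mpr hf).const_mul _).add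
    ((hf.deriv isOpen_ball).const_mul _) |>.sub_const 1).div_const _

lemma schwarzFunction_zero (hf1 : deriv f 0 = 1) : schwarzFunction α f 0 = 0 := by
  simp [schwarzFunction, dslope_same, hf1]

lemma norm_schwarzFunction_le (hα : α < 2) (hf0 : f 0 = 0) (hf1 : deriv f 0 = 1)
    (hbound : ∀ z ∈ ball (0 : ℂ) 1, z ≠ 0 →
      ‖(α : ℂ) * (f z / z) + (1 - (α : ℂ)) * deriv f z - 1‖ ≤ (2 - α) * ‖z‖)
    {w : ℂ} (hw : w ∈ ball (0 : ℂ) 1) :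
    ‖schwarzFunction α f w‖ ≤ ‖w‖ := by
  rcases eq_or_ne w 0 with rfl | hw0
  · simp [schwarzFunction_zero hf1]
  have hnorm : ‖(2 : ℂ) - α‖ = 2 - α := by
    rw [← ofReal_ofNat, ← ofReal_sub, norm_real, Real.norm_of_nonneg (by linarith)]
  rw [schwarzFunction, dslope_eq_div_of_eq_zero hf0 hw0, norm_div, hnorm,
    div_le_iff₀ (by linarith), mul_comm ‖w‖]
  exact hbound w hw hw0

lemma dslope_eq_one_add_integral_schwarzFunction (hα : α < 1)
    (hf : DifferentiableOn ℂ f (ball (0 : ℂ) 1)) (hf1 : deriv f 0 = 1)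
    {z : ℂ} (hz : z ∈ ball (0 : ℂ) 1) :
    dslope f 0 z = 1 + (2 - α) / (1 - α) *
      ∫ s in (0 : ℝ)..1, ((s ^ (α / (1 - α)) : ℝ) : ℂ) * schwarzFunction α f (s * z) := by
  have hg := (differentiableOn_dslope (ball_mem_nhds _ one_pos)).mpr hf
  have h1α : (1 : ℂ) - α ≠ 0 := by exact_mod_cast (by linarith : (1 : ℝ) - α ≠ 0)
  have h2α : (2 : ℂ) - α ≠ 0 := by exact_mod_cast (by linarith : (2 : ℝ) - α ≠ 0)
  rw [eq_add_integral_rpow_mul_deriv (neg_one_lt_div_one_sub hα) hg hz, dslope_same, hf1,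
    ← intervalIntegral.integral_const_mul]
  congr 1
  refine intervalIntegral.integral_congr fun s hs => ?_
  have hsz := ofReal_mul_mem_ball (by rwa [Set.uIcc_of_le zero_le_one] at hs) hz
  have hderiv := deriv_eq_dslope_add_mul_deriv_dslope
    (hg.differentiableAt (isOpen_ball.mem_nhds hsz))
  rw [sub_zero] at hderiv
  simp only [schwarzFunction]
  push_cast
  field_simp
  linear_combination ((α : ℂ) - 1) * ((s ^ (α / (1 - α)) : ℝ) : ℂ) * hderiv

lemma norm_dslope_sub_one_le (hα : α < 1) (hf : DifferentiableOn ℂ f (ball (0 : ℂ) 1))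
    (hf1 : deriv f 0 = 1) (hω_le : ∀ w ∈ ball (0 : ℂ) 1, ‖schwarzFunction α f w‖ ≤ ‖w‖)
    {z : ℂ} (hz : z ∈ ball (0 : ℂ) 1) :
    ‖dslope f 0 z - 1‖ ≤ ‖z‖ := by
  have hC : ‖(2 - (α : ℂ)) / (1 - α)‖ = (2 - α) / (1 - α) := by
    rw [← ofReal_ofNat, ← ofReal_one, ← ofReal_sub, ← ofReal_sub, ← ofReal_div, norm_real,
      Real.norm_of_nonneg (div_nonneg (by linarith) (by linarith))]
  rw [dslope_eq_one_add_integral_schwarzFunction hα hf hf1 hz, add_sub_cancel_left, norm_mul, hC]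
  calc (2 - α) / (1 - α) * ‖∫ s in (0 : ℝ)..1, ((s ^ (α / (1 - α)) : ℝ) : ℂ) *
        schwarzFunction α f (s * z)‖
      ≤ (2 - α) / (1 - α) * (‖z‖ / (α / (1 - α) + 2)) := by
        gcongr
        · exact div_nonneg (by linarith) (by linarith)
        · exact norm_integral_rpow_mul_comp_le (neg_one_lt_div_one_sub hα) hω_le hz
    _ = ‖z‖ := by
        have h1α : 1 - α ≠ 0 := (sub_pos.mpr hα).ne'
        have h2α : 2 - α ≠ 0 := by linarith
        rw [show α / (1 - α) + 2 = (2 - α) / (1 - α) by field_simp; ring]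
        field_simp

end schwarzFunction

/-- Integral representation of the pseudo-analytic classes `𝔄¹_α`, `α < 1`: if `f ∈ A`
satisfies `|α f z / z + (1-α) f' z - 1| ≤ (2-α)|z|` on the disk, then there is a
holomorphic self-map `ω` of the disk with `ω 0 = 0` such that
`f z = z (1 + (2-α)/(1-α) ∫₀¹ s^{α/(1-α)} ω (s z) ds)`, and consequently
`|f z / z - 1| ≤ 1` on the punctured disk. -/
theorem pseudo_analytic_integral_representation
    (α : ℝ) (hα : α < 1)
    (f : ℂ → ℂ) (hf : DifferentiableOn ℂ f (ball (0:ℂ) 1))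
    (hf0 : f 0 = 0) (hf1 : deriv f 0 = 1)
    (hbound : ∀ z ∈ ball (0:ℂ) 1, z ≠ 0 →
      ‖(α : ℂ) * (f z / z) + (1 - (α:ℂ)) * deriv f z - 1‖ ≤ (2 - α) * ‖z‖) :
    ∃ ω : ℂ → ℂ, DifferentiableOn ℂ ω (ball (0:ℂ) 1) ∧ ω 0 = 0 ∧
      (∀ z ∈ ball (0:ℂ) 1, ω z ∈ ball (0:ℂ) 1) ∧
      (∀ z ∈ ball (0:ℂ) 1,
        f z = z * (1 + ((2 - (α:ℂ)) / (1 - (α:ℂ))) *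
          ∫ s in (0:ℝ)..1, ((s ^ (α / (1 - α)) : ℝ) : ℂ) * ω ((s:ℂ) * z))) ∧
      (∀ z ∈ ball (0:ℂ) 1, z ≠ 0 → ‖f z / z - 1‖ ≤ 1) := by
  have hω_le : ∀ w ∈ ball (0 : ℂ) 1, ‖schwarzFunction α f w‖ ≤ ‖w‖ :=
    fun w hw => norm_schwarzFunction_le (by linarith) hf0 hf1 hbound hw
  refine ⟨schwarzFunction α f, differentiableOn_schwarzFunction hf, schwarzFunction_zero hf1,
    fun w hw => ?_, fun z hz => ?_, fun z hz hz0 => ?_⟩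
  · rw [mem_ball_zero_iff] at hw ⊢
    exact (hω_le w (mem_ball_zero_iff.mpr hw)).trans_lt hw
  · rw [eq_mul_dslope_of_eq_zero hf0 z, dslope_eq_one_add_integral_schwarzFunction hα hf hf1 hz]
  · rw [← dslope_eq_div_of_eq_zero hf0 hz0]
    exact (norm_dslope_sub_one_le hα hf hf1 hω_le hz).trans (mem_ball_zero_iff.mp hz).le
end

section
/- For α ≤ β ≤ 1 and f holomorphic on D with |f(z)/z - 1| ≤ 1: if |α f(z)/z + (1-α) f'(z) - 1| ≤ 2-α for all z ∈ D, then |β f(z)/z + (1-β) f'(z) - 1| ≤ 2-β for all z ∈ D. That is, 𝔄¹_α ⊆ 𝔄¹_β. -/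
open Metric Complex

/-- The pseudo-analytic classes form a filtration: `𝔄¹_α ⊆ 𝔄¹_β` for `α ≤ β ≤ 1`.
If `f` is holomorphic on the disk with `|f z / z - 1| ≤ 1` and
`|α f z / z + (1-α) f' z - 1| ≤ 2-α` on the punctured disk, then
`|β f z / z + (1-β) f' z - 1| ≤ 2-β` there as well. -/
theorem pseudo_analytic_filtration
    (α β : ℝ) (hαβ : α ≤ β) (hβ : β ≤ 1)
    (f : ℂ → ℂ) (hf : DifferentiableOn ℂ f (ball (0:ℂ) 1))
    (hdisk : ∀ z ∈ ball (0:ℂ) 1, z ≠ 0 → ‖f z / z - 1‖ ≤ 1)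
    (hmem : ∀ z ∈ ball (0:ℂ) 1, z ≠ 0 →
      ‖(α : ℂ) * (f z / z) + (1 - (α:ℂ)) * deriv f z - 1‖ ≤ 2 - α) :
    ∀ z ∈ ball (0:ℂ) 1, z ≠ 0 →
      ‖(β : ℂ) * (f z / z) + (1 - (β:ℂ)) * deriv f z - 1‖ ≤ 2 - β := by
  intro z hz hz0
  rcases eq_or_lt_of_le (le_trans hαβ hβ) with h1 | hα1
  · -- α = 1, hence β = 1
    have hβ1 : β = 1 := le_antisymm hβ (h1 ▸ hαβ)
    have := hmem z hz hz0
    rw [← h1] at hβ1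
    subst hβ1
    exact this
  · -- α < 1
    set w := f z / z
    set d := deriv f z
    set l : ℝ := (1 - β) / (1 - α) with hl
    set m : ℝ := (β - α) / (1 - α) with hm
    have hα1' : (0:ℝ) < 1 - α := by linarith
    have hlnn : 0 ≤ l := div_nonneg (by linarith) hα1'.le
    have hmnn : 0 ≤ m := div_nonneg (by linarith) hα1'.le
    have hαC : (1 - (α:ℂ)) ≠ 0 := by
      intro h
      have : (α:ℂ) = 1 := by linear_combination -h
      have : α = 1 := by exact_mod_cast this
      linarith
    have key : (β : ℂ) * w + (1 - (β:ℂ)) * d - 1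
        = (l:ℂ) * ((α : ℂ) * w + (1 - (α:ℂ)) * d - 1) + (m:ℂ) * (w - 1) := by
      rw [hl, hm]
      push_cast
      field_simp
      ring
    rw [key]
    calc ‖(l:ℂ) * ((α : ℂ) * w + (1 - (α:ℂ)) * d - 1) + (m:ℂ) * (w - 1)‖
        ≤ ‖(l:ℂ) * ((α : ℂ) * w + (1 - (α:ℂ)) * d - 1)‖ + ‖(m:ℂ) * (w - 1)‖ :=
          norm_add_le _ _
      _ = l * ‖(α : ℂ) * w + (1 - (α:ℂ)) * d - 1‖ + m * ‖w - 1‖ := by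
          rw [norm_mul, norm_mul, Complex.norm_real, Complex.norm_real,
            Real.norm_of_nonneg hlnn, Real.norm_of_nonneg hmnn]
      _ ≤ l * (2 - α) + m * 1 := by
          gcongr
          · exact hmem z hz hz0
          · exact hdisk z hz hz0
      _ = 2 - β := by
          rw [hl, hm]; field_simp; ring
end

section
/- Let f ∈ A be an infinitesimal generator (Re(f(z)/z) ≥ 0 on D\{0}) with Taylor expansion f(z) = z + a₂z² + a₃z³ + ..., and for r > 0 let G_r = (Id + r f)^{-1} be its nonlinear resolvent with expansion G_r(z) = b₁z + b₂z² + b₃z³ + .... Then b₁ = 1/(1+r), b₂ = -r a₂/(1+r)³, b₃ = 2r² a₂²/(1+r)⁵ - r a₃/(1+r)⁴, and consequently b₁b₃ - λ b₂² = -(r/(1+r)⁵)[a₃ - (2-λ)(r/(1+r)) a₂²] for every λ ∈ ℂ. -/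
/-!
At `z = 0` the functional equation reads `G 0 + r f (G 0) = 0`; if `G 0 ≠ 0` this forces
`f (G 0) / G 0 = -1 / r`, whose negative real part contradicts the generator condition, so
`G 0 = 0`. Differentiating `G + r (f ∘ G) = id` once, twice and three times at `0` (Faà di Bruno
up to order three) then gives three relations that are triangular in `G'(0), G''(0), G'''(0)`.
-/

open Metric Complex Filter Topology

theorem eq_zero_of_add_mul_eq_zero_of_re_div_nonneg {r : ℝ} (hr : 0 < r) {w c : ℂ}
    (hc : w ≠ 0 → 0 ≤ (c / w).re) (h : w + r * c = 0) : w = 0 := by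
  by_contra hw
  have hr' : (r : ℂ) ≠ 0 := ofReal_ne_zero.mpr hr.ne'
  have hcw : c / w = -(r : ℂ)⁻¹ := by
    rw [div_eq_iff hw]
    field_simp
    linear_combination h
  have := hc hw
  rw [hcw, ← ofReal_inv, ← ofReal_neg, ofReal_re] at this
  linarith [inv_pos.mpr hr]

section ChainRule

variable {𝕜 : Type*} [NontriviallyNormedField 𝕜] [CompleteSpace 𝕜] {f g : 𝕜 → 𝕜} {x : 𝕜}

theorem AnalyticAt.eventually_analyticAt_comp (hf : AnalyticAt 𝕜 f (g x)) (hg : AnalyticAt 𝕜 g x) :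
    ∀ᶠ y in 𝓝 x, AnalyticAt 𝕜 f (g y) ∧ AnalyticAt 𝕜 g y :=
  (hg.continuousAt.eventually hf.eventually_analyticAt).and hg.eventually_analyticAt

theorem iteratedDeriv_two_comp (hf : AnalyticAt 𝕜 f (g x)) (hg : AnalyticAt 𝕜 g x) :
    iteratedDeriv 2 (f ∘ g) x =
      iteratedDeriv 2 f (g x) * deriv g x ^ 2 + deriv f (g x) * iteratedDeriv 2 g x := by
  have h : deriv (f ∘ g) =ᶠ[𝓝 x] fun y ↦ deriv f (g y) * deriv g y :=
    (hf.eventually_analyticAt_comp hg).mono fun y hy ↦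
      deriv_comp y hy.1.differentiableAt hy.2.differentiableAt
  have hd : HasDerivAt (fun y ↦ deriv f (g y) * deriv g y)
      (deriv (deriv f) (g x) * deriv g x * deriv g x + deriv f (g x) * deriv (deriv g) x) x :=
    (hf.deriv.differentiableAt.hasDerivAt.comp x hg.differentiableAt.hasDerivAt).mul
      hg.deriv.differentiableAt.hasDerivAt
  simp only [iteratedDeriv_succ, iteratedDeriv_zero, h.deriv_eq, hd.deriv]
  ring

theorem iteratedDeriv_three_comp (hf : AnalyticAt 𝕜 f (g x)) (hg : AnalyticAt 𝕜 g x) :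
    iteratedDeriv 3 (f ∘ g) x =
      iteratedDeriv 3 f (g x) * deriv g x ^ 3 +
        3 * iteratedDeriv 2 f (g x) * deriv g x * iteratedDeriv 2 g x +
        deriv f (g x) * iteratedDeriv 3 g x := by
  have h : iteratedDeriv 2 (f ∘ g) =ᶠ[𝓝 x] fun y ↦
      iteratedDeriv 2 f (g y) * deriv g y ^ 2 + deriv f (g y) * iteratedDeriv 2 g y :=
    (hf.eventually_analyticAt_comp hg).mono fun y hy ↦ iteratedDeriv_two_comp hy.1 hy.2
  have hg₁ := hg.differentiableAt.hasDerivAt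
  have hd := ((hf.deriv.deriv.differentiableAt.hasDerivAt.comp x hg₁).fun_mul
      (hg.deriv.differentiableAt.hasDerivAt.fun_pow 2)).fun_add
    ((hf.deriv.differentiableAt.hasDerivAt.comp x hg₁).fun_mul
      hg.deriv.deriv.differentiableAt.hasDerivAt)
  simp only [iteratedDeriv_succ, iteratedDeriv_zero] at h ⊢
  rw [h.deriv_eq]
  refine hd.deriv.trans ?_
  simp only [Function.comp_apply]
  ring

theorem iteratedDeriv_add_const_mul_comp (hf : AnalyticAt 𝕜 f (g x)) (hg : AnalyticAt 𝕜 g x)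
    (c : 𝕜) (n : ℕ) :
    iteratedDeriv n (fun y ↦ g y + c * f (g y)) x =
      iteratedDeriv n g x + c * iteratedDeriv n (f ∘ g) x := by
  rw [iteratedDeriv_fun_add hg.contDiffAt (analyticAt_const.fun_mul (hf.fun_comp hg)).contDiffAt,
    iteratedDeriv_const_mul_field]
  rfl

end ChainRule

theorem resolvent_coefficients_of_relations {K : Type*} [Field K] [CharZero K]
    {r g₁ g₂ g₃ f₂ f₃ : K} (hr : 1 + r ≠ 0)
    (h₁ : g₁ + r * g₁ = 1)
    (h₂ : g₂ + r * (f₂ * g₁ ^ 2 + g₂) = 0)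
    (h₃ : g₃ + r * (f₃ * g₁ ^ 3 + 3 * f₂ * g₁ * g₂ + g₃) = 0) :
    g₁ = 1 / (1 + r) ∧
    g₂ / 2 = -r * (f₂ / 2) / (1 + r) ^ 3 ∧
    g₃ / 6 = 2 * r ^ 2 * (f₂ / 2) ^ 2 / (1 + r) ^ 5 - r * (f₃ / 6) / (1 + r) ^ 4 ∧
    ∀ lam : K, g₁ * (g₃ / 6) - lam * (g₂ / 2) ^ 2 =
      -(r / (1 + r) ^ 5) * (f₃ / 6 - (2 - lam) * (r / (1 + r)) * (f₂ / 2) ^ 2) := by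
  have hg₁ : g₁ = 1 / (1 + r) := by
    field_simp
    linear_combination h₁
  subst hg₁
  have hg₂ : g₂ = -r * f₂ / (1 + r) ^ 3 := by
    field_simp
    field_simp at h₂
    linear_combination h₂
  subst hg₂
  have hg₃ : g₃ = 3 * r ^ 2 * f₂ ^ 2 / (1 + r) ^ 5 - r * f₃ / (1 + r) ^ 4 := by
    field_simp
    field_simp at h₃
    linear_combination h₃
  subst hg₃
  refine ⟨rfl, by ring, by ring, fun lam ↦ ?_⟩
  field_simp
  ring

theorem resolvent_coefficients_general
    (r : ℝ) (hr : 0 < r)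
    (f : ℂ → ℂ) (hf : DifferentiableOn ℂ f (ball (0:ℂ) 1))
    (hf1 : deriv f 0 = 1)
    (hgen : ∀ z ∈ ball (0:ℂ) 1, z ≠ 0 → 0 ≤ (f z / z).re)
    (G : ℂ → ℂ) (hG : DifferentiableOn ℂ G (ball (0:ℂ) 1))
    (hGmap : ∀ z ∈ ball (0:ℂ) 1, G z ∈ ball (0:ℂ) 1)
    (hGeq : ∀ z ∈ ball (0:ℂ) 1, G z + (r : ℂ) * f (G z) = z) :
    deriv G 0 = 1 / (1 + (r:ℂ)) ∧
    iteratedDeriv 2 G 0 / 2 =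
      -(r:ℂ) * (iteratedDeriv 2 f 0 / 2) / (1 + (r:ℂ))^3 ∧
    iteratedDeriv 3 G 0 / 6 =
      2 * (r:ℂ)^2 * (iteratedDeriv 2 f 0 / 2)^2 / (1 + (r:ℂ))^5 -
        (r:ℂ) * (iteratedDeriv 3 f 0 / 6) / (1 + (r:ℂ))^4 ∧
    ∀ lam : ℂ,
      deriv G 0 * (iteratedDeriv 3 G 0 / 6) - lam * (iteratedDeriv 2 G 0 / 2)^2 =
        -((r:ℂ) / (1 + (r:ℂ))^5) *
          (iteratedDeriv 3 f 0 / 6 -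
            (2 - lam) * ((r:ℂ) / (1 + (r:ℂ))) * (iteratedDeriv 2 f 0 / 2)^2) := by
  have h0 : (0 : ℂ) ∈ ball (0 : ℂ) 1 := mem_ball_self one_pos
  have hG0 : G 0 = 0 :=
    eq_zero_of_add_mul_eq_zero_of_re_div_nonneg hr (hgen _ (hGmap 0 h0)) (hGeq 0 h0)
  have hGa : AnalyticAt ℂ G 0 := hG.analyticAt (isOpen_ball.mem_nhds h0)
  have hfa : AnalyticAt ℂ f (G 0) := hf.analyticAt (isOpen_ball.mem_nhds (hGmap 0 h0))
  have hid : (fun z ↦ G z + r * f (G z)) =ᶠ[𝓝 0] id :=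
    eventually_of_mem (isOpen_ball.mem_nhds h0) hGeq
  have hiter (n : ℕ) :
      iteratedDeriv n G 0 + r * iteratedDeriv n (f ∘ G) 0 = iteratedDeriv n id 0 := by
    rw [← iteratedDeriv_add_const_mul_comp hfa hGa, (hid.iteratedDeriv n).eq_of_nhds]
  have h₁ := hiter 1
  have h₂ := hiter 2
  have h₃ := hiter 3
  rw [iteratedDeriv_one, iteratedDeriv_one,
    deriv_comp 0 hfa.differentiableAt hGa.differentiableAt] at h₁
  rw [iteratedDeriv_two_comp hfa hGa] at h₂
  rw [iteratedDeriv_three_comp hfa hGa] at h₃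
  simp only [hG0, hf1, one_mul, iteratedDeriv_id, Nat.reduceEqDiff, reduceIte] at h₁ h₂ h₃
  have hr₁ : 1 + (r : ℂ) ≠ 0 := by exact_mod_cast (by positivity : (1 + r : ℝ) ≠ 0)
  exact resolvent_coefficients_of_relations hr₁ h₁ h₂ h₃

/-- Coefficients of the nonlinear resolvent: if `f ∈ A` is a generator with Taylor
coefficients `a₂, a₃` and `G_r` is its resolvent (the holomorphic self-map of the disk
solving `G_r z + r f (G_r z) = z`, `r > 0`) with coefficients `b₁, b₂, b₃`, then
`b₁ = 1/(1+r)`, `b₂ = -r a₂/(1+r)³`, `b₃ = 2r² a₂²/(1+r)⁵ - r a₃/(1+r)⁴`, and hence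
`b₁ b₃ - λ b₂² = -(r/(1+r)⁵) (a₃ - (2-λ)(r/(1+r)) a₂²)` for all `λ ∈ ℂ`. -/
theorem resolvent_coefficients
    (r : ℝ) (hr : 0 < r)
    (f : ℂ → ℂ) (hf : DifferentiableOn ℂ f (ball (0:ℂ) 1))
    (hf0 : f 0 = 0) (hf1 : deriv f 0 = 1)
    (hgen : ∀ z ∈ ball (0:ℂ) 1, z ≠ 0 → 0 ≤ (f z / z).re)
    (G : ℂ → ℂ) (hG : DifferentiableOn ℂ G (ball (0:ℂ) 1))
    (hGmap : ∀ z ∈ ball (0:ℂ) 1, G z ∈ ball (0:ℂ) 1)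
    (hGeq : ∀ z ∈ ball (0:ℂ) 1, G z + (r : ℂ) * f (G z) = z) :
    deriv G 0 = 1 / (1 + (r:ℂ)) ∧
    iteratedDeriv 2 G 0 / 2 =
      -(r:ℂ) * (iteratedDeriv 2 f 0 / 2) / (1 + (r:ℂ))^3 ∧
    iteratedDeriv 3 G 0 / 6 =
      2 * (r:ℂ)^2 * (iteratedDeriv 2 f 0 / 2)^2 / (1 + (r:ℂ))^5 -
        (r:ℂ) * (iteratedDeriv 3 f 0 / 6) / (1 + (r:ℂ))^4 ∧
    ∀ lam : ℂ,
      deriv G 0 * (iteratedDeriv 3 G 0 / 6) - lam * (iteratedDeriv 2 G 0 / 2)^2 =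
        -((r:ℂ) / (1 + (r:ℂ))^5) *
          (iteratedDeriv 3 f 0 / 6 -
            (2 - lam) * ((r:ℂ) / (1 + (r:ℂ))) * (iteratedDeriv 2 f 0 / 2)^2) :=
  resolvent_coefficients_general r hr f hf hf1 hgen G hG hGmap hGeq
end
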